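/- Let A = (D, I) be an interpretation structure, φ1 and φ2 closed LTL_ss formulas, and t ∈ ℕ with t ≥ 2. Then for every finite word u ∈ Σ*, the one-step unfolding of release holds as an equality of three-valued evaluations: ⟨u, 1 ⊨ φ1 Rt φ2⟩ = ⟨u, 1 ⊨ (φ1 ∧ φ2) ∨ (φ2 ∧ X(φ1 R_{t−1} φ2))⟩ under A. -/
import Mathlib


namespace LTLss

/-- The three truth values of `LTL_ss`: true `⊤`, false `⊥`, inconclusive `?`. -/
inductive TV : Type
  | tt : TV
  | ff : TV
  | uu : TV
  deriving DecidableEq, Repr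

namespace TV

/-- Strong Kleene negation. -/
def neg : TV → TV
  | tt => ff
  | ff => tt
  | uu => uu

/-- Strong Kleene disjunction (max in the order ⊥ ≤ ? ≤ ⊤). -/
def or : TV → TV → TV
  | tt, _ => tt
  | _, tt => tt
  | uu, _ => uu
  | _, uu => uu
  | ff, ff => ff

/-- Strong Kleene conjunction (min in the order ⊥ ≤ ? ≤ ⊤). -/
def and : TV → TV → TV
  | ff, _ => ff
  | _, ff => ff
  | uu, _ => uu
  | _, uu => uu
  | tt, tt => tt

/-- Strong Kleene implication. -/
def imp (a b : TV) : TV := (a.neg).or b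

end TV

/-- Terms over variables `V` and function symbols `F` with arities `arF`;
every natural number is a 0-ary function symbol (constructor `nat`). -/
inductive Term (V F : Type) (arF : F → ℕ) : Type
  | var : V → Term V F arF
  | nat : ℕ → Term V F arF
  | app : (f : F) → (Fin (arF f) → Term V F arF) → Term V F arF

/-- Formulas of `LTL_ss` over variables `V`, function symbols `F` (arities `arF`)
and predicate symbols `P` (arities `arP`).  Timeouts of temporal connectives are
(constant) natural numbers. -/
inductive Formula (V F P : Type) (arF : F → ℕ) (arP : P → ℕ) : Type
  | fls : Formula V F P arF arP
  | tru : Formula V F P arF arP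
  | pred : (p : P) → (Fin (arP p) → Term V F arF) → Formula V F P arF arP
  | eq : Term V F arF → Term V F arF → Formula V F P arF arP
  | not : Formula V F P arF arP → Formula V F P arF arP
  | or : Formula V F P arF arP → Formula V F P arF arP → Formula V F P arF arP
  | and : Formula V F P arF arP → Formula V F P arF arP → Formula V F P arF arP
  | imp : Formula V F P arF arP → Formula V F P arF arP → Formula V F P arF arP
  | next : Formula V F P arF arP → Formula V F P arF arP
  | ev : ℕ → Formula V F P arF arP → Formula V F P arF arP
  | alw : ℕ → Formula V F P arF arP → Formula V F P arF arP
  | untl : ℕ → Formula V F P arF arP → Formula V F P arF arP → Formula V F P arF arP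
  | rel : ℕ → Formula V F P arF arP → Formula V F P arF arP → Formula V F P arF arP
  | consume : V → V → Formula V F P arF arP → Formula V F P arF arP

/-- A finite word over the alphabet `Σ = Term × ℕ` of timed terms. -/
abbrev Word (V F : Type) (arF : F → ℕ) : Type := List (Term V F arF × ℕ)

/-- An interpretation structure `A = (D, I)`: a nonempty domain `D`, an
interpretation of every natural number (0-ary function symbol), of every
function symbol, and of every predicate symbol. -/
structure Interp (F P : Type) (arF : F → ℕ) (arP : P → ℕ) : Type 1 where
  D : Type
  nonempty : Nonempty D
  natI : ℕ → D
  fI : (f : F) → (Fin (arF f) → D) → D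
  pI : (p : P) → Set (Fin (arP p) → D)

variable {V F P : Type} {arF : F → ℕ} {arP : P → ℕ}

/-- Denotation `⟦e⟧^A` of a (closed) term; variables get an irrelevant junk value. -/
noncomputable def Term.den (A : Interp F P arF arP) : Term V F arF → A.D
  | .var _ => Classical.choice A.nonempty
  | .nat n => A.natI n
  | .app f es => A.fI f fun k => Term.den A (es k)

/-- Free variables of a term. -/
def Term.fv : Term V F arF → Set V
  | .var v => {v}
  | .nat _ => ∅
  | .app _ es => ⋃ k, Term.fv (es k)

open Classical

/-- Substitution of a term `s` for a variable `v` in a term. -/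
noncomputable def Term.subst (v : V) (s : Term V F arF) : Term V F arF → Term V F arF
  | .var w => if w = v then s else .var w
  | .nat n => .nat n
  | .app f es => .app f fun k => Term.subst v s (es k)

/-- Free variables of a formula; the consume operator `λ_x^o.φ` binds `x` and `o`. -/
def Formula.fv : Formula V F P arF arP → Set V
  | .fls => ∅
  | .tru => ∅
  | .pred _ es => ⋃ k, (es k).fv
  | .eq e₁ e₂ => e₁.fv ∪ e₂.fv
  | .not φ => φ.fv
  | .or φ ψ => φ.fv ∪ ψ.fv
  | .and φ ψ => φ.fv ∪ ψ.fv
  | .imp φ ψ => φ.fv ∪ ψ.fv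
  | .next φ => φ.fv
  | .ev _ φ => φ.fv
  | .alw _ φ => φ.fv
  | .untl _ φ ψ => φ.fv ∪ ψ.fv
  | .rel _ φ ψ => φ.fv ∪ ψ.fv
  | .consume x o φ => φ.fv \ {x, o}

/-- A formula is closed if it has no free variables. -/
def Formula.closed (φ : Formula V F P arF arP) : Prop := φ.fv = (∅ : Set V)

/-- (Capture-avoiding-for-closed-terms) substitution `φ[v ↦ s]`. -/
noncomputable def Formula.subst (v : V) (s : Term V F arF) :
    Formula V F P arF arP → Formula V F P arF arP
  | .fls => .fls
  | .tru => .tru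
  | .pred p es => .pred p fun k => (es k).subst v s
  | .eq e₁ e₂ => .eq (e₁.subst v s) (e₂.subst v s)
  | .not φ => .not (φ.subst v s)
  | .or φ ψ => .or (φ.subst v s) (ψ.subst v s)
  | .and φ ψ => .and (φ.subst v s) (ψ.subst v s)
  | .imp φ ψ => .imp (φ.subst v s) (ψ.subst v s)
  | .next φ => .next (φ.subst v s)
  | .ev t φ => .ev t (φ.subst v s)
  | .alw t φ => .alw t (φ.subst v s)
  | .untl t φ ψ => .untl t (φ.subst v s) (ψ.subst v s)
  | .rel t φ ψ => .rel t (φ.subst v s) (ψ.subst v s)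
  | .consume x o φ => .consume x o (if v = x ∨ v = o then φ else φ.subst v s)

/-- Number of connectives of a formula (used for termination of evaluation). -/
def Formula.size : Formula V F P arF arP → ℕ
  | .fls => 0
  | .tru => 0
  | .pred _ _ => 0
  | .eq _ _ => 0
  | .not φ => φ.size + 1
  | .or φ ψ => φ.size + ψ.size + 1
  | .and φ ψ => φ.size + ψ.size + 1
  | .imp φ ψ => φ.size + ψ.size + 1
  | .next φ => φ.size + 1
  | .ev _ φ => φ.size + 1
  | .alw _ φ => φ.size + 1
  | .untl _ φ ψ => φ.size + ψ.size + 1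
  | .rel _ φ ψ => φ.size + ψ.size + 1
  | .consume _ _ φ => φ.size + 1

theorem Formula.size_subst (v : V) (s : Term V F arF) :
    ∀ φ : Formula V F P arF arP, (φ.subst v s).size = φ.size := by
  intro φ
  induction φ with
  | consume x o ψ ih =>
      simp only [Formula.subst, Formula.size]
      split <;> simp [ih]
  | _ => simp_all [Formula.subst, Formula.size]

/-- The three-valued evaluation judgment `⟨u, i ⊨ φ⟩` of `LTL_ss` under an
interpretation structure `A`.  Positions `i` are 1-based; `u.get ⟨i-1, _⟩` is the
`i`-th letter of `u`. -/
noncomputable def eval (A : Interp F P arF arP) (u : Word V F arF) :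
    ℕ → Formula V F P arF arP → TV
  | _, .fls => .ff
  | _, .tru => .tt
  | _, .pred p es => if (fun k => (es k).den A) ∈ A.pI p then .tt else .ff
  | _, .eq e₁ e₂ => if e₁.den A = e₂.den A then .tt else .ff
  | i, .not φ => (eval A u i φ).neg
  | i, .or φ ψ => (eval A u i φ).or (eval A u i ψ)
  | i, .and φ ψ => (eval A u i φ).and (eval A u i ψ)
  | i, .imp φ ψ => (eval A u i φ).imp (eval A u i ψ)
  | i, .next φ => eval A u (i + 1) φ
  | i, .consume x o φ =>
      if h : 1 ≤ i ∧ i ≤ u.length then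
        eval A u (i + 1)
          ((φ.subst x (u.get ⟨i - 1, by omega⟩).1).subst o (.nat (u.get ⟨i - 1, by omega⟩).2))
      else .uu
  | i, .ev t φ =>
      if ∃ k, i ≤ k ∧ k ≤ i + t - 1 ∧ eval A u k φ = .tt then .tt
      else if ∀ k, i ≤ k → k ≤ i + t - 1 → eval A u k φ = .ff then .ff
      else .uu
  | i, .alw t φ =>
      if ∀ k, i ≤ k → k ≤ i + t - 1 → eval A u k φ = .tt then .tt
      else if ∃ k, i ≤ k ∧ k ≤ i + t - 1 ∧ eval A u k φ = .ff then .ff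
      else .uu
  | i, .untl t φ₁ φ₂ =>
      if ∃ k, i ≤ k ∧ k ≤ i + t - 1 ∧ eval A u k φ₂ = .tt ∧
           ∀ j, i ≤ j → j < k → eval A u j φ₁ = .tt then .tt
      else if (∃ k, i ≤ k ∧ k ≤ i + t - 1 ∧ eval A u k φ₁ = .ff ∧
                 ∀ j, i ≤ j → j ≤ k → eval A u j φ₂ = .ff) ∨
              ((∀ k, i ≤ k → k ≤ i + t - 1 → eval A u k φ₁ = .tt) ∧
               (∀ l, i ≤ l → l ≤ min (i + t - 1) u.length → eval A u l φ₂ = .ff)) then .ff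
      else .uu
  | i, .rel t φ₁ φ₂ =>
      if (∃ k, i ≤ k ∧ k ≤ i + t - 1 ∧ eval A u k φ₁ = .tt ∧
            ∀ j, i ≤ j → j ≤ k → eval A u j φ₂ = .tt) ∨
         (∀ k, i ≤ k → k ≤ i + t - 1 → eval A u k φ₂ = .tt) then .tt
      else if ∃ k, i ≤ k ∧ k ≤ i + t - 1 ∧ eval A u k φ₂ = .ff ∧
                ∀ j, i ≤ j → j < k → eval A u j φ₁ = .ff then .ff
      else .uu
termination_by _i φ => φ.size
decreasing_by all_goals (simp [Formula.size, Formula.size_subst]; try omega)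

/-- `u ⊨^A φ`: the word `u` satisfies `φ` under `A`, i.e. `⟨u, 1 ⊨ φ⟩ = ⊤`. -/
def sat (A : Interp F P arF arP) (u : Word V F arF) (φ : Formula V F P arF arP) : Prop :=
  eval A u 1 φ = TV.tt

/-- A formula is timeless if it contains no temporal connective
(no `X`, `◇`, `□`, `U`, `R`, `λ`). -/
def Formula.timeless : Formula V F P arF arP → Prop
  | .fls => True
  | .tru => True
  | .pred _ _ => True
  | .eq _ _ => True
  | .not φ => φ.timeless
  | .or φ ψ => φ.timeless ∧ ψ.timeless
  | .and φ ψ => φ.timeless ∧ ψ.timeless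
  | .imp φ ψ => φ.timeless ∧ ψ.timeless
  | _ => False

/-- All the timeouts of temporal connectives occurring in the formula are
positive integer constants. -/
def Formula.posTimeouts : Formula V F P arF arP → Prop
  | .fls => True
  | .tru => True
  | .pred _ _ => True
  | .eq _ _ => True
  | .not φ => φ.posTimeouts
  | .or φ ψ => φ.posTimeouts ∧ ψ.posTimeouts
  | .and φ ψ => φ.posTimeouts ∧ ψ.posTimeouts
  | .imp φ ψ => φ.posTimeouts ∧ ψ.posTimeouts
  | .next φ => φ.posTimeouts
  | .ev t φ => 1 ≤ t ∧ φ.posTimeouts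
  | .alw t φ => 1 ≤ t ∧ φ.posTimeouts
  | .untl t φ ψ => 1 ≤ t ∧ φ.posTimeouts ∧ ψ.posTimeouts
  | .rel t φ ψ => 1 ≤ t ∧ φ.posTimeouts ∧ ψ.posTimeouts
  | .consume _ _ φ => φ.posTimeouts

/-- A formula is in next form: built only from `⊥`, `⊤`, predicate applications,
equalities, `¬`, `∨`, `∧`, `→`, `X` and the consume operator (no `◇`, `□`, `U`, `R`). -/
def Formula.nextForm : Formula V F P arF arP → Prop
  | .fls => True
  | .tru => True
  | .pred _ _ => True
  | .eq _ _ => True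
  | .not φ => φ.nextForm
  | .or φ ψ => φ.nextForm ∧ ψ.nextForm
  | .and φ ψ => φ.nextForm ∧ ψ.nextForm
  | .imp φ ψ => φ.nextForm ∧ ψ.nextForm
  | .next φ => φ.nextForm
  | .ev _ _ => False
  | .alw _ _ => False
  | .untl _ _ _ => False
  | .rel _ _ _ => False
  | .consume _ _ φ => φ.nextForm

/-- The formula contains no occurrence of the negation connective. -/
def Formula.negFree : Formula V F P arF arP → Prop
  | .fls => True
  | .tru => True
  | .pred _ _ => True
  | .eq _ _ => True
  | .not _ => False
  | .or φ ψ => φ.negFree ∧ ψ.negFree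
  | .and φ ψ => φ.negFree ∧ ψ.negFree
  | .imp φ ψ => φ.negFree ∧ ψ.negFree
  | .next φ => φ.negFree
  | .ev _ φ => φ.negFree
  | .alw _ φ => φ.negFree
  | .untl _ φ ψ => φ.negFree ∧ ψ.negFree
  | .rel _ φ ψ => φ.negFree ∧ ψ.negFree
  | .consume _ _ φ => φ.negFree

/-- `X^k ψ`: `k`-fold application of the next operator. -/
def iterNext : ℕ → Formula V F P arF arP → Formula V F P arF arP
  | 0, ψ => ψ
  | k + 1, ψ => .next (iterNext k ψ)

/-- Right-nested disjunction of a nonempty list of formulas. -/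
def orList : Formula V F P arF arP → List (Formula V F P arF arP) → Formula V F P arF arP
  | ψ, [] => ψ
  | ψ, χ :: l => .or ψ (orList χ l)

/-- Right-nested conjunction of a nonempty list of formulas. -/
def andList : Formula V F P arF arP → List (Formula V F P arF arP) → Formula V F P arF arP
  | ψ, [] => ψ
  | ψ, χ :: l => .and ψ (andList χ l)

/-- `⋁_{k=0}^{t-1} f k` (for `t ≥ 1`; `f 0` when `t ≤ 1`). -/
def bigOr (f : ℕ → Formula V F P arF arP) (t : ℕ) : Formula V F P arF arP :=
  orList (f 0) (((List.range (t - 1)).map fun k => f (k + 1)))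

/-- `⋀_{k=0}^{t-1} f k` (for `t ≥ 1`; `f 0` when `t ≤ 1`). -/
def bigAnd (f : ℕ → Formula V F P arF arP) (t : ℕ) : Formula V F P arF arP :=
  andList (f 0) (((List.range (t - 1)).map fun k => f (k + 1)))

/-- The `k`-th disjunct `ψ₁ ∧ X ψ₁ ∧ … ∧ X^{k-1} ψ₁ ∧ X^k ψ₂` of the explicit
transformation of until (just `ψ₂` for `k = 0`). -/
def untilDisj (ψ₁ ψ₂ : Formula V F P arF arP) : ℕ → Formula V F P arF arP
  | 0 => ψ₂
  | k + 1 =>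
      andList ψ₁
        ((((List.range k).map fun j => iterNext (j + 1) ψ₁)) ++ [iterNext (k + 1) ψ₂])

/-- The `k`-th disjunct `ψ₂ ∧ X ψ₂ ∧ … ∧ X^{k-1} ψ₂ ∧ X^k (ψ₁ ∧ ψ₂)` of the explicit
transformation of release (just `ψ₁ ∧ ψ₂` for `k = 0`). -/
def relDisj (ψ₁ ψ₂ : Formula V F P arF arP) : ℕ → Formula V F P arF arP
  | 0 => .and ψ₁ ψ₂
  | k + 1 =>
      andList ψ₂
        ((((List.range k).map fun j => iterNext (j + 1) ψ₂)) ++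
          [iterNext (k + 1) (.and ψ₁ ψ₂)])

/-- The explicit next transformation `nt^e`. -/
def nte : Formula V F P arF arP → Formula V F P arF arP
  | .fls => .fls
  | .tru => .tru
  | .pred p es => .pred p es
  | .eq e₁ e₂ => .eq e₁ e₂
  | .not φ => .not (nte φ)
  | .or φ ψ => .or (nte φ) (nte ψ)
  | .and φ ψ => .and (nte φ) (nte ψ)
  | .imp φ ψ => .imp (nte φ) (nte ψ)
  | .next φ => .next (nte φ)
  | .ev t φ => bigOr (fun k => iterNext k (nte φ)) t
  | .alw t φ => bigAnd (fun k => iterNext k (nte φ)) t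
  | .untl t φ₁ φ₂ => bigOr (untilDisj (nte φ₁) (nte φ₂)) t
  | .rel t φ₁ φ₂ =>
      .or (bigAnd (fun k => iterNext k (nte φ₂)) t) (bigOr (relDisj (nte φ₁) (nte φ₂)) t)
  | .consume x o φ => .consume x o (nte φ)

/-- Auxiliary recursion for `nt` on eventually: `nt(◇₁ φ) = nt φ`,
`nt(◇ₜ φ) = nt φ ∨ X nt(◇_{t-1} φ)` for `t ≥ 2`. -/
def evAux (ψ : Formula V F P arF arP) : ℕ → Formula V F P arF arP
  | 0 => ψ
  | 1 => ψ
  | t + 2 => .or ψ (.next (evAux ψ (t + 1)))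

/-- Auxiliary recursion for `nt` on always. -/
def alwAux (ψ : Formula V F P arF arP) : ℕ → Formula V F P arF arP
  | 0 => ψ
  | 1 => ψ
  | t + 2 => .and ψ (.next (alwAux ψ (t + 1)))

/-- Auxiliary recursion for `nt` on until. -/
def untlAux (ψ₁ ψ₂ : Formula V F P arF arP) : ℕ → Formula V F P arF arP
  | 0 => ψ₂
  | 1 => ψ₂
  | t + 2 => .or ψ₂ (.and ψ₁ (.next (untlAux ψ₁ ψ₂ (t + 1))))

/-- Auxiliary recursion for `nt` on release. -/
def relAux (ψ₁ ψ₂ : Formula V F P arF arP) : ℕ → Formula V F P arF arP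
  | 0 => .and ψ₁ ψ₂
  | 1 => .and ψ₁ ψ₂
  | t + 2 => .or (.and ψ₁ ψ₂) (.and ψ₂ (.next (relAux ψ₁ ψ₂ (t + 1))))

/-- The recursive next transformation `nt`. -/
def nt : Formula V F P arF arP → Formula V F P arF arP
  | .fls => .fls
  | .tru => .tru
  | .pred p es => .pred p es
  | .eq e₁ e₂ => .eq e₁ e₂
  | .not φ => .not (nt φ)
  | .or φ ψ => .or (nt φ) (nt ψ)
  | .and φ ψ => .and (nt φ) (nt ψ)
  | .imp φ ψ => .imp (nt φ) (nt ψ)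
  | .next φ => .next (nt φ)
  | .ev t φ => evAux (nt φ) t
  | .alw t φ => alwAux (nt φ) t
  | .untl t φ₁ φ₂ => untlAux (nt φ₁) (nt φ₂) t
  | .rel t φ₁ φ₂ => relAux (nt φ₁) (nt φ₂) t
  | .consume x o φ => .consume x o (nt φ)

/-- The safe word length `swl(φ)` of a formula whose temporal-connective
timeouts are positive integer constants. -/
def swl : Formula V F P arF arP → ℕ
  | .fls => 0
  | .tru => 0
  | .pred _ _ => 0
  | .eq _ _ => 0
  | .not φ => swl φ
  | .or φ ψ => max (swl φ) (swl ψ)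
  | .and φ ψ => max (swl φ) (swl ψ)
  | .imp φ ψ => max (swl φ) (swl ψ)
  | .next φ => swl φ + 1
  | .ev t φ => swl φ + (t - 1)
  | .alw t φ => swl φ + (t - 1)
  | .untl t φ ψ => max (swl φ) (swl ψ) + (t - 1)
  | .rel t φ ψ => max (swl φ) (swl ψ) + (t - 1)
  | .consume _ _ φ => swl φ + 1

/-- Letter simplification `ls^A(ψ, s)` of a formula in next form built without
negation, with a letter `s = (e, t)`. -/
noncomputable def ls (A : Interp F P arF arP) (s : Term V F arF × ℕ) :
    Formula V F P arF arP → Formula V F P arF arP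
  | .fls => .fls
  | .tru => .tru
  | .pred p es => if (fun k => (es k).den A) ∈ A.pI p then .tru else .fls
  | .eq e₁ e₂ => if e₁.den A = e₂.den A then .tru else .fls
  | .or φ ψ => .or (ls A s φ) (ls A s ψ)
  | .and φ ψ => .and (ls A s φ) (ls A s ψ)
  | .imp φ ψ => .imp (ls A s φ) (ls A s ψ)
  | .next φ => φ
  | .consume x o φ => (φ.subst x s.1).subst o (.nat s.2)
  | φ => φ

lemma eval_or' (A : Interp F P arF arP) (u : Word V F arF) (i : ℕ)
    (φ₁ φ₂ : Formula V F P arF arP) :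
    eval A u i (.or φ₁ φ₂) = (eval A u i φ₁).or (eval A u i φ₂) := by rw [eval]

lemma eval_and' (A : Interp F P arF arP) (u : Word V F arF) (i : ℕ)
    (φ₁ φ₂ : Formula V F P arF arP) :
    eval A u i (.and φ₁ φ₂) = (eval A u i φ₁).and (eval A u i φ₂) := by rw [eval]

lemma eval_next' (A : Interp F P arF arP) (u : Word V F arF) (i : ℕ)
    (φ : Formula V F P arF arP) :
    eval A u i (.next φ) = eval A u (i + 1) φ := by rw [eval]

lemma eval_rel' (A : Interp F P arF arP) (u : Word V F arF) (i t : ℕ)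
    (φ₁ φ₂ : Formula V F P arF arP) :
    eval A u i (.rel t φ₁ φ₂) =
      if (∃ k, i ≤ k ∧ k ≤ i + t - 1 ∧ eval A u k φ₁ = .tt ∧
            ∀ j, i ≤ j → j ≤ k → eval A u j φ₂ = .tt) ∨
         (∀ k, i ≤ k → k ≤ i + t - 1 → eval A u k φ₂ = .tt) then .tt
      else if ∃ k, i ≤ k ∧ k ≤ i + t - 1 ∧ eval A u k φ₂ = .ff ∧
                ∀ j, i ≤ j → j < k → eval A u j φ₁ = .ff then .ff
      else .uu := by rw [eval]

/-- One-step unfolding of release: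
`⟨u, 1 ⊨ φ₁ Rₜ φ₂⟩ = ⟨u, 1 ⊨ (φ₁ ∧ φ₂) ∨ (φ₂ ∧ X(φ₁ R_{t-1} φ₂))⟩` for `t ≥ 2`. -/
theorem rel_unfold {V F P : Type} [Denumerable V] [Denumerable F] [Denumerable P]
    {arF : F → ℕ} {arP : P → ℕ}
    (A : Interp F P arF arP) (φ₁ φ₂ : Formula V F P arF arP)
    (hc₁ : φ₁.closed) (hc₂ : φ₂.closed) (t : ℕ) (ht : 2 ≤ t) :
    ∀ u : Word V F arF,
      eval A u 1 (.rel t φ₁ φ₂) =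
        eval A u 1 (.or (.and φ₁ φ₂) (.and φ₂ (.next (.rel (t - 1) φ₁ φ₂)))) := by
  intro u
  rw [eval_or', eval_and', eval_and', eval_next', eval_rel', eval_rel']
  simp only [show 1 + t - 1 = t from by omega, show 1 + 1 = 2 from rfl,
    show 2 + (t - 1) - 1 = t from by omega]
  -- abbreviate the four conditions
  set Ptt : Prop := (∃ k, 1 ≤ k ∧ k ≤ t ∧ eval A u k φ₁ = TV.tt ∧
      ∀ j, 1 ≤ j → j ≤ k → eval A u j φ₂ = TV.tt) ∨
    (∀ k, 1 ≤ k → k ≤ t → eval A u k φ₂ = TV.tt) with hPttdef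
  set Pff : Prop := (∃ k, 1 ≤ k ∧ k ≤ t ∧ eval A u k φ₂ = TV.ff ∧
      ∀ j, 1 ≤ j → j < k → eval A u j φ₁ = TV.ff) with hPffdef
  set Qtt : Prop := (∃ k, 2 ≤ k ∧ k ≤ t ∧ eval A u k φ₁ = TV.tt ∧
      ∀ j, 2 ≤ j → j ≤ k → eval A u j φ₂ = TV.tt) ∨
    (∀ k, 2 ≤ k → k ≤ t → eval A u k φ₂ = TV.tt) with hQttdef
  set Qff : Prop := (∃ k, 2 ≤ k ∧ k ≤ t ∧ eval A u k φ₂ = TV.ff ∧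
      ∀ j, 2 ≤ j → j < k → eval A u j φ₁ = TV.ff) with hQffdef
  have h1 : Ptt ↔ (eval A u 1 φ₁ = TV.tt ∧ eval A u 1 φ₂ = TV.tt) ∨
      (eval A u 1 φ₂ = TV.tt ∧ Qtt) := by
    rw [hPttdef, hQttdef]
    constructor
    · rintro (⟨k, hk1, hkt, h₁, h₂⟩ | hall)
      · by_cases hk : k = 1
        · subst hk; exact Or.inl ⟨h₁, h₂ 1 le_rfl le_rfl⟩
        · exact Or.inr ⟨h₂ 1 le_rfl (by omega),
            Or.inl ⟨k, by omega, hkt, h₁, fun j hj hjk => h₂ j (by omega) hjk⟩⟩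
      · exact Or.inr ⟨hall 1 le_rfl (by omega),
          Or.inr fun k hk hkt => hall k (by omega) hkt⟩
    · rintro (⟨ha, hb⟩ | ⟨hb, ⟨k, hk2, hkt, h₁, h₂⟩ | hall⟩)
      · exact Or.inl ⟨1, le_rfl, by omega, ha, fun j hj hjk => by
          have : j = 1 := by omega
          subst this; exact hb⟩
      · refine Or.inl ⟨k, by omega, hkt, h₁, fun j hj hjk => ?_⟩
        by_cases hj1 : j = 1
        · subst hj1; exact hb
        · exact h₂ j (by omega) hjk
      · refine Or.inr fun k hk hkt => ?_
        by_cases hk1 : k = 1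
        · subst hk1; exact hb
        · exact hall k (by omega) hkt
  have h2 : Pff ↔ eval A u 1 φ₂ = TV.ff ∨ (eval A u 1 φ₁ = TV.ff ∧ Qff) := by
    rw [hPffdef, hQffdef]
    constructor
    · rintro ⟨k, hk1, hkt, h₂, h₁⟩
      by_cases hk : k = 1
      · subst hk; exact Or.inl h₂
      · exact Or.inr ⟨h₁ 1 le_rfl (by omega),
          ⟨k, by omega, hkt, h₂, fun j hj hjk => h₁ j (by omega) hjk⟩⟩
    · rintro (hb | ⟨ha, ⟨k, hk2, hkt, h₂, h₁⟩⟩)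
      · exact ⟨1, le_rfl, by omega, hb, fun j hj hjk => absurd hjk (by omega)⟩
      · refine ⟨k, by omega, hkt, h₂, fun j hj hjk => ?_⟩
        by_cases hj1 : j = 1
        · subst hj1; exact ha
        · exact h₁ j (by omega) hjk
  have hex : Qtt → ¬ Qff := by
    rw [hQttdef, hQffdef]
    rintro (⟨k, hk2, hkt, h1t, h2t⟩ | hall) ⟨k', hk'2, hk't, h2f, h1f⟩
    · by_cases hkk : k < k'
      · rw [h1f k hk2 hkk] at h1t; exact absurd h1t (by decide)
      · rw [h2t k' hk'2 (by omega)] at h2f; exact absurd h2f (by decide)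
    · rw [hall k' hk'2 hk't] at h2f; exact absurd h2f (by decide)
  by_cases hPtt : Ptt
  · rw [if_pos hPtt]
    rcases h1.mp hPtt with ⟨ha, hb⟩ | ⟨hb, hQ⟩
    · rw [ha, hb]; simp [TV.and, TV.or]
    · rw [hb, if_pos hQ]; cases eval A u 1 φ₁ <;> simp [TV.and, TV.or]
  · rw [if_neg hPtt]
    by_cases hPff : Pff
    · rw [if_pos hPff]
      rcases h2.mp hPff with hb | ⟨ha, hQf⟩
      · rw [hb]; cases eval A u 1 φ₁ <;> simp [TV.and, TV.or]
      · have hQt : ¬ Qtt := fun h => hex h hQf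
        rw [ha, if_neg hQt, if_pos hQf]
        cases eval A u 1 φ₂ <;> simp [TV.and, TV.or]
    · rw [if_neg hPff]
      by_cases hQtt : Qtt
      · rw [if_pos hQtt]
        have hb : eval A u 1 φ₂ = TV.uu := by
          rcases hB : eval A u 1 φ₂ with _ | _ | _
          · exact absurd (h1.mpr (Or.inr ⟨hB, hQtt⟩)) hPtt
          · exact absurd (h2.mpr (Or.inl hB)) hPff
          · rfl
        rw [hb]; cases eval A u 1 φ₁ <;> simp [TV.and, TV.or]
      · rw [if_neg hQtt]
        have ha' : eval A u 1 φ₁ = TV.tt ∧ eval A u 1 φ₂ = TV.tt → False :=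
          fun h => hPtt (h1.mpr (Or.inl h))
        have hb' : eval A u 1 φ₂ ≠ TV.ff := fun h => hPff (h2.mpr (Or.inl h))
        by_cases hQff : Qff
        · rw [if_pos hQff]
          have ha'' : eval A u 1 φ₁ ≠ TV.ff := fun h => hPff (h2.mpr (Or.inr ⟨h, hQff⟩))
          rcases hA : eval A u 1 φ₁ with _ | _ | _ <;>
            rcases hB : eval A u 1 φ₂ with _ | _ | _ <;>
            simp [TV.and, TV.or] <;>
            first
              | exact ha' (And.intro hA hB)
              | exact ha'' hA
              | exact hb' hB
        · rw [if_neg hQff]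
          rcases hA : eval A u 1 φ₁ with _ | _ | _ <;>
            rcases hB : eval A u 1 φ₂ with _ | _ | _ <;>
            simp [TV.and, TV.or] <;>
            first
              | exact ha' (And.intro hA hB)
              | exact hb' hB

end LTLss
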